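/- arXiv:2409.14145 — 6 statements merged into one kernel-verified Lean document; each statement's English description precedes it below -/
import Mathlib

section
/- Let A be a commutative ring, B a commutative A-algebra. Then B is faithfully flat over A if and only if the cokernel-complex cofib(A → B) (the quotient B/A in the derived sense) is a flat A-module, i.e., Tor_i^A(B/A, N) = 0 for all i > 0 and all A-modules N, where B/A denotes the cone of A → B. -/
/-!
Let `C = B/A` be the cokernel of `f : A → B`. If `f` is injective and `C` is flat, then
`0 → A → B → C → 0` stays exact after tensoring with any module, i.e. `f` is universally
injective; so `B` is flat as an extension of flat modules, and faithful because
`N ≅ N ⊗ A ↪ N ⊗ B`. Conversely, a faithfully flat `B` makes `f` universally injective;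
tensoring `0 → A → B → C → 0` with an injection `X ↪ Y` and chasing the snake diagram,
whose cokernel row is `(Y/X) ⊗ A ↪ (Y/X) ⊗ B`, shows that `X ⊗ C → Y ⊗ C` is injective.
-/

open LinearMap TensorProduct Function

universe u v

namespace LinearMap

variable {R : Type*} [CommRing R] {M₁ M₂ M₃ N₁ N₂ N₃ C₁ C₂ : Type*}
  [AddCommGroup M₁] [Module R M₁] [AddCommGroup M₂] [Module R M₂]
  [AddCommGroup M₃] [Module R M₃] [AddCommGroup N₁] [Module R N₁]
  [AddCommGroup N₂] [Module R N₂] [AddCommGroup N₃] [Module R N₃]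
  [AddCommGroup C₁] [Module R C₁] [AddCommGroup C₂] [Module R C₂]

/-- A piece of the snake lemma for the commutative diagram with exact rows and columns
```
M₁ -f₁→ M₂ -f₂→ M₃ → 0
|i₁     |i₂     |i₃
N₁ -g₁→ N₂ -g₂→ N₃
|π₁     |π₂
C₁ --G→ C₂
```
-/
lemma injective_of_injective_of_injective_coker
    (f₁ : M₁ →ₗ[R] M₂) (f₂ : M₂ →ₗ[R] M₃) (g₁ : N₁ →ₗ[R] N₂) (g₂ : N₂ →ₗ[R] N₃)
    (i₁ : M₁ →ₗ[R] N₁) (i₂ : M₂ →ₗ[R] N₂) (i₃ : M₃ →ₗ[R] N₃)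
    (π₁ : N₁ →ₗ[R] C₁) (π₂ : N₂ →ₗ[R] C₂) (G : C₁ →ₗ[R] C₂)
    (hc₁ : g₁ ∘ₗ i₁ = i₂ ∘ₗ f₁) (hc₂ : g₂ ∘ₗ i₂ = i₃ ∘ₗ f₂)
    (hcG : G ∘ₗ π₁ = π₂ ∘ₗ g₁)
    (hf : Exact f₁ f₂) (hf₂ : Surjective f₂) (hg : Exact g₁ g₂)
    (hπ₁ : Exact i₁ π₁) (hπ₂ : Exact i₂ π₂) (hi₂ : Injective i₂) (hG : Injective G) :
    Injective i₃ := by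
  rw [injective_iff_map_eq_zero]
  intro x hx
  obtain ⟨y, rfl⟩ := hf₂ x
  obtain ⟨z, hz⟩ : i₂ y ∈ range g₁ :=
    (hg _).mp (by rw [← comp_apply, hc₂, comp_apply, hx])
  obtain ⟨w, rfl⟩ : z ∈ range i₁ := (hπ₁ _).mp <| hG <| by
    rw [map_zero, ← comp_apply, hcG, comp_apply, hz, hπ₂.apply_apply_eq_zero]
  have hw : f₁ w = y := hi₂ (by rw [← comp_apply, ← hc₁, comp_apply, hz])
  rw [← hw, hf.apply_apply_eq_zero]

end LinearMap

namespace Module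

variable {R : Type u} [CommRing R] {M N : Type*} {P : Type v}
  [AddCommGroup M] [Module R M] [AddCommGroup N] [Module R N] [AddCommGroup P] [Module R P]

theorem Flat.of_exact_of_flat_flat [Flat R M] [Flat R P] (f : M →ₗ[R] N) (g : N →ₗ[R] P)
    (hf : Function.Injective f) (hfg : Exact f g) (hg : Surjective g) : Flat R N := by
  rw [Flat.iff_rTensor_preserves_injective_linearMap]
  intro X Y _ _ _ _ u hu
  have hpure := lTensor_injective_of_exact_of_flat g hg f hf hfg
  exact injective_of_surjective_of_injective_of_injective (0 : Unit →ₗ[R] _) (f.lTensor X)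
    (g.lTensor X) (0 : Unit →ₗ[R] _) (f.lTensor Y) (g.lTensor Y) 0
    (u.rTensor M) (u.rTensor N) (u.rTensor P)
    (by simp) (by rw [lTensor_comp_rTensor, rTensor_comp_lTensor])
    (by rw [lTensor_comp_rTensor, rTensor_comp_lTensor])
    ((exact_zero_iff_injective _ _).mpr (hpure X)) (_root_.lTensor_exact X hfg hg)
    ((exact_zero_iff_injective _ _).mpr (hpure Y)) (fun _ => ⟨0, rfl⟩)
    (Flat.rTensor_preserves_injective_linearMap u hu)
    (Flat.rTensor_preserves_injective_linearMap u hu)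

theorem Flat.of_exact_of_lTensor_injective [Flat R N] (f : M →ₗ[R] N) (g : N →ₗ[R] P)
    (hfg : Exact f g) (hg : Surjective g)
    (hf : ∀ (Q : Type (max u v)) [AddCommGroup Q] [Module R Q],
      Function.Injective (f.lTensor Q)) :
    Flat R P := by
  rw [Flat.iff_rTensor_preserves_injective_linearMap]
  intro X Y _ _ _ _ u hu
  have hu' := exact_map_mkQ_range u
  have hp := (range u).mkQ_surjective
  exact injective_of_injective_of_injective_coker (f.lTensor X) (g.lTensor X)
    (f.lTensor Y) (g.lTensor Y) (u.rTensor M) (u.rTensor N) (u.rTensor P)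
    ((range u).mkQ.rTensor M) ((range u).mkQ.rTensor N) (f.lTensor (Y ⧸ range u))
    (by rw [lTensor_comp_rTensor, rTensor_comp_lTensor])
    (by rw [lTensor_comp_rTensor, rTensor_comp_lTensor])
    (by rw [lTensor_comp_rTensor, rTensor_comp_lTensor])
    (_root_.lTensor_exact X hfg hg) (lTensor_surjective X hg)
    (_root_.lTensor_exact Y hfg hg)
    (_root_.rTensor_exact M hu' hp) (_root_.rTensor_exact N hu' hp)
    (Flat.rTensor_preserves_injective_linearMap u hu) (hf _)

theorem FaithfullyFlat.of_lTensor_injective {M : Type v} [AddCommGroup M] [Module R M]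
    [Flat R M] (φ : R →ₗ[R] M)
    (hφ : ∀ (N : Type (max u v)) [AddCommGroup N] [Module R N],
      Function.Injective (φ.lTensor N)) :
    FaithfullyFlat R M := by
  refine (FaithfullyFlat.iff_flat_and_rTensor_reflects_triviality R M).mpr
    ⟨‹_›, fun N _ _ _ => ?_⟩
  have : Subsingleton (N ⊗[R] R) := (hφ N).subsingleton
  exact (TensorProduct.rid R N).symm.toEquiv.subsingleton

theorem FaithfullyFlat.lTensor_algebraMap_injective (A B : Type*) [CommRing A] [CommRing B]
    [Algebra A B] [FaithfullyFlat A B] (Q : Type*) [AddCommGroup Q] [Module A Q] :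
    Function.Injective ((Algebra.linearMap A B).lTensor Q) := by
  have h : (Algebra.linearMap A B).rTensor Q =
      TensorProduct.mk A B Q 1 ∘ₗ TensorProduct.lid A Q := by
    ext q
    simp
  rw [lTensor_inj_iff_rTensor_inj, h, coe_comp, LinearEquiv.coe_coe, EquivLike.injective_comp]
  exact FaithfullyFlat.tensorProduct_mk_injective Q

end Module

theorem faithfullyFlat_iff_injective_and_flat_cokernel
    (A B : Type*) [CommRing A] [CommRing B] [Algebra A B] :
    Module.FaithfullyFlat A B ↔
      (Function.Injective (algebraMap A B) ∧
        Module.Flat A (B ⧸ LinearMap.range (Algebra.linearMap A B))) := by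
  set f := Algebra.linearMap A B
  have hexact : Exact f (range f).mkQ := exact_map_mkQ_range f
  have hsurj : Surjective (range f).mkQ := (range f).mkQ_surjective
  constructor
  · intro _
    exact ⟨FaithfulSMul.algebraMap_injective A B,
      .of_exact_of_lTensor_injective f _ hexact hsurj
        (Module.FaithfullyFlat.lTensor_algebraMap_injective A B)⟩
  · rintro ⟨hinj, _⟩
    have : Module.Flat A B := .of_exact_of_flat_flat f _ hinj hexact hsurj
    exact .of_lTensor_injective f (lTensor_injective_of_exact_of_flat _ hsurj f hinj hexact)
end

section
/- Let A₀ → A₁ → ⋯ be a sequence of commutative rings with colimit A∞, and let M be an A∞-module. If M is flat as an A_n-module for every n, then M is flat as an A∞-module. -/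
/-!
A relation `∑ fᵢ xᵢ = 0` in `M` over `A∞` involves finitely many coefficients, which all come from
a single stage `A n`. Viewed over `A n` the relation is trivial by the equational criterion, since
`M` is `A n`-flat, and pushing the trivializing coefficients forward to `A∞` trivializes the
original relation. Hence `M` is `A∞`-flat by the equational criterion.
-/

open Module

theorem Module.IsTrivialRelation.of_sum_algebraMap_smul_eq_zero {R S M : Type*} [CommRing R]
    [CommRing S] [Algebra R S] [AddCommGroup M] [Module R M] [Module S M] [IsScalarTower R S M]
    [Flat R M] {ι : Type*} [Fintype ι] {b : ι → R} {x : ι → M}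
    (h : ∑ i, algebraMap R S (b i) • x i = 0) :
    IsTrivialRelation (fun i ↦ algebraMap R S (b i)) x := by
  have hR : ∑ i, b i • x i = 0 := by simpa only [algebraMap_smul] using h
  obtain ⟨k, a, y, hxy, hba⟩ := Flat.isTrivialRelation_of_sum_smul_eq_zero hR
  refine ⟨k, fun i j ↦ algebraMap R S (a i j), y, fun i ↦ ?_, fun j ↦ ?_⟩
  · simpa only [algebraMap_smul] using hxy i
  · simpa only [map_sum, map_mul, map_zero] using congrArg (algebraMap R S) (hba j)

theorem Module.Flat.of_forall_exists_algebraMap_eq {ι : Type*} {R : ι → Type*}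
    [∀ i, CommRing (R i)] {S M : Type*} [CommRing S] [AddCommGroup M] [Module S M]
    [∀ i, Algebra (R i) S] [∀ i, Module (R i) M] [∀ i, IsScalarTower (R i) S M]
    [∀ i, Flat (R i) M]
    (hlift : ∀ {l : ℕ} (f : Fin l → S),
      ∃ i, ∃ b : Fin l → R i, ∀ k, algebraMap (R i) S (b k) = f k) :
    Flat S M := by
  refine Flat.iff_forall_isTrivialRelation.mpr fun {l f x} hfx ↦ ?_
  obtain ⟨i, b, hb⟩ := hlift f
  obtain rfl : (fun k ↦ algebraMap (R i) S (b k)) = f := funext hb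
  exact IsTrivialRelation.of_sum_algebraMap_smul_eq_zero hfx

theorem Ring.DirectLimit.exists_of_finite {ι : Type*} [Preorder ι] [Nonempty ι]
    [IsDirectedOrder ι] {G : ι → Type*} [∀ i, CommRing (G i)] {f : ∀ i j, i ≤ j → G i → G j}
    {κ : Type*} [Finite κ] (z : κ → DirectLimit G f) :
    ∃ i, ∃ x : κ → G i, ∀ k, of G f i (x k) = z k := by
  choose j y hy using fun k ↦ exists_of (z k)
  obtain ⟨i, hi⟩ := Finite.bddAbove_range j
  exact ⟨i, fun k ↦ f (j k) i (hi ⟨k, rfl⟩) (y k), fun k ↦ by rw [of_f, hy]⟩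

theorem flat_of_flat_over_each_stage
    (G : ℕ → Type*) [∀ n, CommRing (G n)]
    (f : ∀ i j : ℕ, i ≤ j → G i →+* G j)
    (M : Type*) [AddCommGroup M]
    [Module (Ring.DirectLimit G (fun i j h => f i j h)) M]
    (hflat : ∀ n : ℕ,
      letI : Module (G n) M :=
        Module.compHom M (Ring.DirectLimit.of G (fun i j h => f i j h) n)
      Module.Flat (G n) M) :
    Module.Flat (Ring.DirectLimit G (fun i j h => f i j h)) M := by
  let (n : ℕ) : Algebra (G n) (Ring.DirectLimit G (fun i j h => f i j h)) :=
    (Ring.DirectLimit.of G _ n).toAlgebra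
  let (n : ℕ) : Module (G n) M :=
    Module.compHom M (Ring.DirectLimit.of G (fun i j h => f i j h) n)
  have (n : ℕ) : IsScalarTower (G n) (Ring.DirectLimit G (fun i j h => f i j h)) M :=
    ⟨fun _ _ _ ↦ mul_smul _ _ _⟩
  have := hflat
  exact Flat.of_forall_exists_algebraMap_eq fun z ↦ Ring.DirectLimit.exists_of_finite z
end

section
/- Let A₀ → A₁ → ⋯ be a sequence of commutative rings with colimit A∞, and let B be a commutative A∞-algebra. If B is faithfully flat over A_n for every n, then B is faithfully flat over A∞. -/
/-!
A relation `∑ rᵢ xᵢ = 0` in `B` involves finitely many `rᵢ ∈ A∞`, all of which come from a single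
stage `Aₙ`; there it is trivial by the equational criterion for flatness, and mapping the
trivialisation to `A∞` shows that `B` is flat over `A∞`. Likewise, if `I • B = B` for a proper
ideal `I` of `A∞`, then `1` is already a combination of finitely many elements of `I` lying in
some `Aₙ`, so the proper ideal `I ∩ Aₙ` of `Aₙ` also generates the unit ideal of `B`, against
faithful flatness of `B` over `Aₙ`.
-/

open Module

section FiniteLifting

variable {ι R : Type*} [CommRing R] (A : ι → Type*) [∀ i, CommRing (A i)] [∀ i, Algebra (A i) R]

theorem Module.Flat.of_finset_subset_range {M : Type*} [AddCommGroup M] [Module R M]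
    [∀ i, Module (A i) M] [∀ i, IsScalarTower (A i) R M] [∀ i, Flat (A i) M]
    (hlift : ∀ s : Finset R, ∃ i, ↑s ⊆ Set.range (algebraMap (A i) R)) :
    Flat R M := by
  classical
  refine Flat.of_forall_isTrivialRelation fun {l r x} hrx => ?_
  obtain ⟨i, hi⟩ := hlift (Finset.univ.image r)
  choose a ha using fun j => hi (Finset.mem_coe.2 (Finset.mem_image_of_mem r (Finset.mem_univ j)))
  have hax : ∑ j, a j • x j = 0 := by
    rw [← hrx]
    exact Finset.sum_congr rfl fun j _ => by rw [← ha j, algebraMap_smul]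
  obtain ⟨k, c, y, hxy, hac⟩ := Flat.isTrivialRelation_of_sum_smul_eq_zero hax
  refine ⟨k, fun j m => algebraMap (A i) R (c j m), y, fun j => ?_, fun m => ?_⟩
  · simp only [hxy j, algebraMap_smul]
  · simpa only [← ha, ← map_mul, ← map_sum, map_zero] using congrArg (algebraMap (A i) R) (hac m)

theorem Module.FaithfullyFlat.of_finset_subset_range {B : Type*} [CommRing B] [Algebra R B]
    [∀ i, Algebra (A i) B] [∀ i, IsScalarTower (A i) R B] [∀ i, FaithfullyFlat (A i) B]
    (hlift : ∀ s : Finset R, ∃ i, ↑s ⊆ Set.range (algebraMap (A i) R)) :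
    FaithfullyFlat R B := by
  classical
  refine (FaithfullyFlat.iff_flat_and_proper_ideal R B).2
    ⟨.of_finset_subset_range A hlift, fun I hI hIB => ?_⟩
  rw [Ideal.smul_top_eq_map, Submodule.restrictScalars_eq_top_iff, Ideal.eq_top_iff_one] at hIB
  obtain ⟨T, hTI, hT⟩ := Submodule.mem_span_finite_of_mem_span hIB
  obtain ⟨s, hsI, rfl⟩ := Finset.subset_set_image_iff.1 hTI
  obtain ⟨i, hi⟩ := hlift s
  let J := I.comap (algebraMap (A i) R)
  have hJB : J.map (algebraMap (A i) B) = ⊤ := by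
    refine (Ideal.eq_top_iff_one _).2 (Ideal.span_mono ?_ hT)
    intro b hb
    obtain ⟨r, hr, rfl⟩ := Finset.mem_image.1 hb
    obtain ⟨a, rfl⟩ := hi hr
    exact ⟨a, hsI hr, IsScalarTower.algebraMap_apply (A i) R B a⟩
  refine (FaithfullyFlat.iff_flat_and_proper_ideal (A i) B).1 inferInstance |>.2 J
    (Ideal.comap_ne_top _ hI) ?_
  rw [Ideal.smul_top_eq_map, hJB, Submodule.restrictScalars_top]

end FiniteLifting

theorem Ring.DirectLimit.exists_finset_subset_range_of {ι : Type*} [Preorder ι] [Nonempty ι]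
    [IsDirectedOrder ι] {G : ι → Type*} [∀ i, CommRing (G i)] {f : ∀ i j, i ≤ j → G i → G j}
    (s : Finset (DirectLimit G f)) : ∃ i, ↑s ⊆ Set.range (DirectLimit.of G f i) := by
  classical
  choose idx x hx using fun z : DirectLimit G f => DirectLimit.exists_of z
  obtain ⟨k, hk⟩ := Finset.exists_le (s.image idx)
  exact ⟨k, fun z hz =>
    ⟨f (idx z) k (hk _ (Finset.mem_image_of_mem idx hz)) (x z), by rw [DirectLimit.of_f, hx]⟩⟩

theorem faithfullyFlat_of_faithfullyFlat_over_each_stage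
    (G : ℕ → Type*) [∀ n, CommRing (G n)]
    (f : ∀ i j : ℕ, i ≤ j → G i →+* G j)
    (B : Type*) [CommRing B]
    [Algebra (Ring.DirectLimit G (fun i j h => f i j h)) B]
    (hff : ∀ n : ℕ,
      letI : Module (G n) B :=
        Module.compHom B ((algebraMap (Ring.DirectLimit G (fun i j h => f i j h)) B).comp
          (Ring.DirectLimit.of G (fun i j h => f i j h) n))
      Module.FaithfullyFlat (G n) B) :
    Module.FaithfullyFlat (Ring.DirectLimit G (fun i j h => f i j h)) B := by
  let of := Ring.DirectLimit.of G (fun i j h => f i j h)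
  let (n : ℕ) : Algebra (G n) (Ring.DirectLimit G (fun i j h => f i j h)) := (of n).toAlgebra
  let (n : ℕ) : Algebra (G n) B := ((algebraMap _ B).comp (of n)).toAlgebra
  have (n : ℕ) : IsScalarTower (G n) (Ring.DirectLimit G (fun i j h => f i j h)) B :=
    .of_algebraMap_eq fun _ => rfl
  have := hff
  exact FaithfullyFlat.of_finset_subset_range G Ring.DirectLimit.exists_finset_subset_range_of
end

section
/- Let B be a Noetherian local ring with maximal ideal m. Suppose L is a B-module which is a direct summand of a product ∏_{i∈I} B of copies of B, and suppose L ⊗_B B/m^n = 0 for all n ≥ 1. Then L = 0. -/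
/-!
A linear functional `f : L → B` sends `m ^ n • L` into `m ^ n`, so if `m ^ n • L = L` for every
`n ≥ 1`, then every value of `f` lies in `⨅ n, m ^ n`, which is `0` by Krull's intersection
theorem. A direct summand of `∏_{i ∈ I} B` has enough functionals (the coordinates of its
embedding) to separate points, hence `L = 0`.
-/

namespace LinearMap

variable {R M : Type*} [CommRing R] [AddCommGroup M] [Module R M]

theorem map_smul_top_le (J : Ideal R) (f : M →ₗ[R] R) :
    (J • ⊤ : Submodule R M).map f ≤ J :=
  Submodule.map_le_iff_le_comap.2 <| Submodule.smul_le.2 fun r hr x _ => by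
    simpa using J.mul_mem_right (f x) hr

theorem eq_zero_of_pow_maximalIdeal_smul_top [IsNoetherianRing R] [IsLocalRing R]
    (hM : ∀ n : ℕ, 1 ≤ n → (IsLocalRing.maximalIdeal R ^ n) • (⊤ : Submodule R M) = ⊤)
    (f : M →ₗ[R] R) : f = 0 := by
  ext x
  have hmem : ∀ n : ℕ, f x ∈ IsLocalRing.maximalIdeal R ^ n := by
    intro n
    rcases Nat.eq_zero_or_pos n with rfl | hn
    · simp
    refine f.map_smul_top_le _ ⟨x, ?_, rfl⟩
    rw [hM n hn]
    trivial
  have hbot : ⨅ n : ℕ, IsLocalRing.maximalIdeal R ^ n = ⊥ :=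
    Ideal.iInf_pow_eq_bot_of_isLocalRing _ (IsLocalRing.maximalIdeal.isMaximal R).ne_top
  simpa [hbot] using (Submodule.mem_iInf _).2 hmem

end LinearMap

theorem eq_zero_of_summand_of_prod_of_smul_top
    (B : Type*) [CommRing B] [IsNoetherianRing B] [IsLocalRing B]
    (I : Type*) (L : Type*) [AddCommGroup L] [Module B L]
    (ι : L →ₗ[B] (I → B)) (π : (I → B) →ₗ[B] L)
    (hsplit : π.comp ι = LinearMap.id)
    (hm : ∀ n : ℕ, 1 ≤ n →
      (IsLocalRing.maximalIdeal B ^ n) • (⊤ : Submodule B L) = ⊤) :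
    Subsingleton L := by
  have hι : Function.Injective ι :=
    Function.LeftInverse.injective (g := π) fun x => LinearMap.congr_fun hsplit x
  have hzero : ι = 0 := by
    ext x i
    exact LinearMap.congr_fun
      (LinearMap.eq_zero_of_pow_maximalIdeal_smul_top hm (LinearMap.proj i ∘ₗ ι)) x
  exact ⟨fun x y => hι (by rw [hzero, LinearMap.zero_apply, LinearMap.zero_apply])⟩
end

section
/- Let A be a commutative ring finitely generated as an algebra over a Jacobson ring B. Then every maximal ideal m of A restricts to a maximal ideal of B, and the residue field A/m is a finite extension of B/(m ∩ B). -/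
/-!
By Zariski's lemma over a Jacobson ring, the residue field `A ⧸ m` is a finite `B`-module.
Hence the field `A ⧸ m` is integral over the subring `B ⧸ (m ∩ B)`, which is therefore a field,
and finiteness over `B` descends to finiteness over its quotient `B ⧸ (m ∩ B)`.
-/

theorem Ideal.Quotient.finite_of_isJacobsonRing (R : Type*) {S : Type*} [CommRing R]
    [CommRing S] [IsJacobsonRing R] [Algebra R S] [Algebra.FiniteType R S] (m : Ideal S)
    [m.IsMaximal] : Module.Finite R (S ⧸ m) :=
  let := Ideal.Quotient.field m
  finite_of_finite_type_of_isJacobsonRing R (S ⧸ m)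

theorem Ideal.isMaximal_comap_of_isIntegral_quotient {R S : Type*} [CommRing R] [CommRing S]
    [Algebra R S] (m : Ideal S) [m.IsMaximal] [Algebra.IsIntegral R (S ⧸ m)] :
    (m.comap (algebraMap R S)).IsMaximal := by
  let := Ideal.Quotient.field m
  have := Ideal.isMaximal_comap_of_isIntegral_of_isMaximal (R := R) (⊥ : Ideal (S ⧸ m))
  rwa [IsScalarTower.algebraMap_eq R S (S ⧸ m), ← Ideal.comap_comap,
    Ideal.Quotient.algebraMap_eq, ← RingHom.ker_eq_comap_bot, Ideal.mk_ker] at this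

theorem Ideal.quotientMap_finite_of_finite_quotient {R S : Type*} [CommRing R] [CommRing S]
    [Algebra R S] (m : Ideal S) [Module.Finite R (S ⧸ m)] :
    (Ideal.quotientMap m (algebraMap R S) le_rfl).Finite := by
  refine RingHom.Finite.of_comp_finite (f := Ideal.Quotient.mk (m.comap (algebraMap R S))) ?_
  rw [Ideal.quotientMap_comp_mk, ← Ideal.Quotient.algebraMap_eq, ← IsScalarTower.algebraMap_eq]
  exact RingHom.finite_algebraMap.mpr ‹_›

theorem comap_isMaximal_and_residue_finite_of_jacobson
    (B A : Type*) [CommRing B] [CommRing A] [IsJacobsonRing B]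
    [Algebra B A] [Algebra.FiniteType B A]
    (m : Ideal A) [m.IsMaximal] :
    (m.comap (algebraMap B A)).IsMaximal ∧
      RingHom.Finite (Ideal.quotientMap m (algebraMap B A) le_rfl) := by
  have := Ideal.Quotient.finite_of_isJacobsonRing B m
  exact ⟨m.isMaximal_comap_of_isIntegral_quotient, m.quotientMap_finite_of_finite_quotient⟩
end

section
/- Let f : L → L be the Z_p-linear endomorphism of L = (∏_{n≥0} Z_p)[1/p] given by (a₀, a₁, a₂, …) ↦ (0, a₀, p a₁, p² a₂, …). Then for every a ∈ Z and every unit u ∈ Z_p^×, the map id − p^a u f : L → L is an isomorphism. -/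
/-!
On all sequences, `x - c • f x = y` has a unique solution, computed coordinate by coordinate:
`x (n + 1) = y (n + 1) + c pⁿ x n`. Since `ℚ_p` is ultrametric and `c pⁿ → 0`, from some index on
`‖x (n + 1)‖ ≤ max ‖y (n + 1)‖ ‖x n‖`, so `x` is bounded whenever `y` is.
-/

/-- `(∏_{n ≥ 0} ℤ_p)[1/p]`, realized as the bounded sequences in `ℚ_p`. -/
noncomputable def boundedSeq (p : ℕ) [Fact p.Prime] : Submodule ℚ_[p] (ℕ → ℚ_[p]) where
  carrier := {x | ∃ C : ℝ, ∀ n, ‖x n‖ ≤ C}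
  add_mem' := by
    rintro x y ⟨C, hC⟩ ⟨D, hD⟩
    exact ⟨C + D, fun n => (norm_add_le _ _).trans (add_le_add (hC n) (hD n))⟩
  zero_mem' := ⟨0, fun n => by simp⟩
  smul_mem' := by
    rintro c x ⟨C, hC⟩
    refine ⟨‖c‖ * C, fun n => ?_⟩
    simpa [norm_smul] using mul_le_mul_of_nonneg_left (hC n) (norm_nonneg c)

/-- The shift-and-scale map `(a₀, a₁, a₂, …) ↦ (0, a₀, p a₁, p² a₂, …)` on all
sequences. -/
noncomputable def shiftScaleAux (p : ℕ) [Fact p.Prime] : (ℕ → ℚ_[p]) →ₗ[ℚ_[p]] (ℕ → ℚ_[p]) where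
  toFun x n :=
    match n with
    | 0 => 0
    | m + 1 => (p : ℚ_[p]) ^ m * x m
  map_add' x y := by
    funext n
    cases n with
    | zero => simp
    | succ m => simp [mul_add]
  map_smul' c x := by
    funext n
    cases n with
    | zero => simp
    | succ m => simp [Pi.smul_apply, smul_eq_mul]; ring

lemma shiftScaleAux_mem (p : ℕ) [Fact p.Prime] :
    ∀ x ∈ boundedSeq p, shiftScaleAux p x ∈ boundedSeq p := by
  rintro x ⟨C, hC⟩
  refine ⟨max C 0, fun n => ?_⟩
  cases n with
  | zero => simp [shiftScaleAux]
  | succ m =>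
    have h1 : ‖(p : ℚ_[p]) ^ m‖ ≤ 1 := by
      rw [norm_pow]
      exact pow_le_one₀ (norm_nonneg _) Padic.norm_p_lt_one.le
    calc ‖(shiftScaleAux p x) (m + 1)‖ = ‖(p : ℚ_[p]) ^ m‖ * ‖x m‖ := by
          simp [shiftScaleAux]
      _ ≤ 1 * ‖x m‖ := mul_le_mul_of_nonneg_right h1 (norm_nonneg _)
      _ = ‖x m‖ := one_mul _
      _ ≤ max C 0 := le_trans (hC m) (le_max_left _ _)

/-- The shift-and-scale map `f` as an endomorphism of `L = (∏_{n≥0} ℤ_p)[1/p]`. -/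
noncomputable def shiftScale (p : ℕ) [Fact p.Prime] :
    boundedSeq p →ₗ[ℚ_[p]] boundedSeq p :=
  (shiftScaleAux p).restrict (shiftScaleAux_mem p)

open Filter Set

lemma eventually_norm_mul_pow_le_one {K : Type*} [SeminormedRing K] (c : K) {r : K}
    (hr : ‖r‖ < 1) : ∀ᶠ n in atTop, ‖c * r ^ n‖ ≤ 1 := by
  have hlim : Tendsto (fun n => ‖c * r ^ n‖) atTop (nhds 0) := by
    simpa using ((tendsto_pow_atTop_nhds_zero_of_norm_lt_one hr).const_mul c).norm
  exact hlim.eventually_le_const zero_lt_one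

lemma bddAbove_range_norm_of_eq_add_mul {K : Type*} [SeminormedRing K] [IsUltrametricDist K]
    {x y w : ℕ → K} (hrec : ∀ n, x (n + 1) = y (n + 1) + w n * x n)
    (hy : BddAbove (range fun n => ‖y n‖)) (hw : ∀ᶠ n in atTop, ‖w n‖ ≤ 1) : BddAbove (range fun n => ‖x n‖) := by
  obtain ⟨C, hC⟩ := hy
  obtain ⟨N, hN⟩ := eventually_atTop.mp hw
  have hbound : ∀ n ≥ N, ‖x n‖ ≤ max C ‖x N‖ := by
    refine Nat.le_induction (le_max_right _ _) fun n hn ih => ?_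
    have hwx : ‖w n * x n‖ ≤ max C ‖x N‖ :=
      calc ‖w n * x n‖ ≤ ‖w n‖ * ‖x n‖ := norm_mul_le _ _
        _ ≤ 1 * max C ‖x N‖ := mul_le_mul (hN n hn) ih (norm_nonneg _) zero_le_one
        _ = max C ‖x N‖ := one_mul _
    calc ‖x (n + 1)‖ ≤ max ‖y (n + 1)‖ ‖w n * x n‖ :=
          hrec n ▸ IsUltrametricDist.norm_add_le_max _ _
      _ ≤ max C (max C ‖x N‖) := max_le_max (hC (mem_range_self _)) hwx
      _ = max C ‖x N‖ := by simp
  exact (isBoundedUnder_of_eventually_le (eventually_atTop.mpr ⟨N, hbound⟩)).bddAbove_range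

variable {p : ℕ} [Fact p.Prime]

lemma mem_boundedSeq_iff {x : ℕ → ℚ_[p]} :
    x ∈ boundedSeq p ↔ BddAbove (range fun n => ‖x n‖) := by
  simp [boundedSeq, bddAbove_def]

@[simp]
lemma shiftScaleAux_apply_zero (x : ℕ → ℚ_[p]) : shiftScaleAux p x 0 = 0 := rfl

@[simp]
lemma shiftScaleAux_apply_succ (x : ℕ → ℚ_[p]) (n : ℕ) :
    shiftScaleAux p x (n + 1) = (p : ℚ_[p]) ^ n * x n := rfl

lemma sub_smul_shiftScaleAux_apply_succ (c : ℚ_[p]) (x : ℕ → ℚ_[p]) (n : ℕ) :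
    (x - c • shiftScaleAux p x) (n + 1) = x (n + 1) - c * (p : ℚ_[p]) ^ n * x n := by
  simp [mul_assoc]

lemma coe_id_sub_smul_shiftScale_apply (c : ℚ_[p]) (x : boundedSeq p) :
    ((LinearMap.id - c • shiftScale p : boundedSeq p →ₗ[ℚ_[p]] boundedSeq p) x : ℕ → ℚ_[p]) =
      x - c • shiftScaleAux p x :=
  rfl

noncomputable def idSubSmulShiftScaleInv (c : ℚ_[p]) (y : ℕ → ℚ_[p]) : ℕ → ℚ_[p]
  | 0 => y 0
  | n + 1 => y (n + 1) + c * (p : ℚ_[p]) ^ n * idSubSmulShiftScaleInv c y n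

lemma sub_smul_shiftScaleAux_eq_iff {c : ℚ_[p]} {x y : ℕ → ℚ_[p]} :
    x - c • shiftScaleAux p x = y ↔ x = idSubSmulShiftScaleInv c y := by
  constructor
  · rintro rfl
    funext n
    induction n with
    | zero => simp [idSubSmulShiftScaleInv]
    | succ n ih => rw [idSubSmulShiftScaleInv, sub_smul_shiftScaleAux_apply_succ, ← ih]; ring
  · rintro rfl
    funext n
    cases n with
    | zero => simp [idSubSmulShiftScaleInv]
    | succ n => rw [sub_smul_shiftScaleAux_apply_succ, idSubSmulShiftScaleInv]; ring

lemma idSubSmulShiftScaleInv_mem_boundedSeq (c : ℚ_[p]) {y : ℕ → ℚ_[p]} (hy : y ∈ boundedSeq p) :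
    idSubSmulShiftScaleInv c y ∈ boundedSeq p :=
  mem_boundedSeq_iff.mpr <| bddAbove_range_norm_of_eq_add_mul (fun _ => rfl)
    (mem_boundedSeq_iff.mp hy) (eventually_norm_mul_pow_le_one c Padic.norm_p_lt_one)

theorem bijective_id_sub_smul_shiftScale (c : ℚ_[p]) :
    Function.Bijective (LinearMap.id - c • shiftScale p : boundedSeq p →ₗ[ℚ_[p]] boundedSeq p) := by
  refine (Function.bijective_iff_existsUnique _).mpr fun y => ?_
  refine ⟨⟨_, idSubSmulShiftScaleInv_mem_boundedSeq c y.2⟩, Subtype.ext ?_, fun x hx => ?_⟩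
  · exact (coe_id_sub_smul_shiftScale_apply c _).trans (sub_smul_shiftScaleAux_eq_iff.mpr rfl)
  · have hxy := (coe_id_sub_smul_shiftScale_apply c x).symm.trans (congrArg Subtype.val hx)
    exact Subtype.ext (sub_smul_shiftScaleAux_eq_iff.mp hxy)

theorem bijective_id_sub_scalar_shiftScale_general
    (p : ℕ) [Fact p.Prime] (a : ℤ) (u : ℤ_[p]) :
    Function.Bijective
      (⇑(LinearMap.id - ((p : ℚ_[p]) ^ a * (u : ℚ_[p])) • shiftScale p :
        boundedSeq p →ₗ[ℚ_[p]] boundedSeq p)) :=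
  bijective_id_sub_smul_shiftScale _

theorem bijective_id_sub_scalar_shiftScale
    (p : ℕ) [Fact p.Prime] (a : ℤ) (u : ℤ_[p]) (hu : IsUnit u) :
    Function.Bijective
      (⇑(LinearMap.id - ((p : ℚ_[p]) ^ a * (u : ℚ_[p])) • shiftScale p :
        boundedSeq p →ₗ[ℚ_[p]] boundedSeq p)) :=
  bijective_id_sub_scalar_shiftScale_general p a u
end
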